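/- Let u : ℝ² → ℝ be three times continuously differentiable, let x₁, x₂ ∈ ℝ², let m = (x₁ + x₂)/2, and suppose K ≥ 0 bounds the third derivative of u on the segment [x₁, x₂], i.e., |D³u(q)[e,e,e]| ≤ K·|e|³ for all q ∈ [x₁,x₂] and e ∈ ℝ². Then |𝐧(∇u(m)) · (x₂ − x₁, u(x₂) − u(x₁))| ≤ (K/24)·|x₂ − x₁|³. -/

import Mathlib

/-!
Restrict `u` to the line through the midpoint `m` in the direction `d = x₂ - x₁`,
`g t = u (m + t • d)`. Lagrange's form of Taylor's theorem of order two at `t = ±1/2`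
gives `g (±1/2) = g 0 ± g' 0 / 2 + g'' 0 / 8 ± g''' ξ± / 48`; in the difference the
second-order terms cancel, so `|u x₂ - u x₁ - Du(m) d|` is at most `2 · K‖d‖³ / 48`.
Finally `⟪𝐧(p), (d, w)⟫ = (w - ⟪p, d⟫) / √(1 + ‖p‖²)`, and the factor is at most one.
-/

open scoped RealInnerProductSpace

noncomputable section

/-- Euclidean plane and 3-space. -/
abbrev E2 := EuclideanSpace ℝ (Fin 2)
abbrev E3 := EuclideanSpace ℝ (Fin 3)

/-- The vector `(v, t) ∈ ℝ³` with first two components `v ∈ ℝ²` and last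
component `t ∈ ℝ`. -/
def toR3 (v : E2) (t : ℝ) : E3 :=
  (WithLp.equiv 2 (Fin 3 → ℝ)).symm ![v 0, v 1, t]

/-- The upward unit normal `𝐧(p) = (−p, 1)/√(1+|p|²)` of a graph with
gradient `p`. -/
def gauss (p : E2) : E3 := (Real.sqrt (1 + ‖p‖ ^ 2))⁻¹ • toR3 (-p) 1

open Set

theorem iteratedDeriv_comp_add_smul {E F : Type*} [NormedAddCommGroup E] [NormedSpace ℝ E]
    [NormedAddCommGroup F] [NormedSpace ℝ F] {f : E → F} {n : WithTop ℕ∞} (hf : ContDiff ℝ n f)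
    (a v : E) {k : ℕ} (hk : k ≤ n) (t : ℝ) :
    iteratedDeriv k (fun s : ℝ => f (a + s • v)) t =
      iteratedFDeriv ℝ k f (a + t • v) (fun _ => v) := by
  let L : ℝ →L[ℝ] E := (ContinuousLinearMap.id ℝ ℝ).smulRight v
  have hfa : ContDiff ℝ n (fun z => f (a + z)) := hf.comp (contDiff_const.add contDiff_id)
  have hcomp : (fun s : ℝ => f (a + s • v)) = (fun z => f (a + z)) ∘ L := rfl
  rw [iteratedDeriv_eq_iteratedFDeriv, hcomp, L.iteratedFDeriv_comp_right hfa t hk,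
    ContinuousMultilinearMap.compContinuousLinearMap_apply, iteratedFDeriv_comp_add_left]
  simp [L]

theorem taylor_mean_remainder_lagrange_two {g : ℝ → ℝ} (hg : ContDiff ℝ 3 g) {x : ℝ} (hx : x ≠ 0) :
    ∃ ξ ∈ uIoo 0 x, g x - (g 0 + deriv g 0 * x + iteratedDeriv 2 g 0 * x ^ 2 / 2) =
      iteratedDeriv 3 g ξ * x ^ 3 / 6 := by
  obtain ⟨ξ, hξ, h⟩ := taylor_mean_remainder_lagrange_iteratedDeriv (n := 2) hx.symm hg.contDiffOn
  have hu : UniqueDiffOn ℝ (uIcc 0 x) := uniqueDiffOn_uIcc hx.symm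
  have hwithin (k : ℕ) (hk : k ≤ 3) : iteratedDerivWithin k g (uIcc 0 x) 0 = iteratedDeriv k g 0 :=
    iteratedDerivWithin_eq_iteratedDeriv hu ((hg.of_le (by exact_mod_cast hk)).contDiffAt)
      left_mem_uIcc
  refine ⟨ξ, hξ, ?_⟩
  simp only [taylor_within_apply, Finset.sum_range_succ, Finset.sum_range_zero,
    hwithin _ (by norm_num : (0:ℕ) ≤ 3), hwithin _ (by norm_num : (1:ℕ) ≤ 3),
    hwithin _ (by norm_num : (2:ℕ) ≤ 3)] at h
  norm_num [Nat.factorial] at h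
  linear_combination h

theorem abs_sub_sub_two_mul_deriv_le {g : ℝ → ℝ} (hg : ContDiff ℝ 3 g) {r C : ℝ} (hr : 0 < r)
    (hC : ∀ t ∈ Icc (-r) r, |iteratedDeriv 3 g t| ≤ C) :
    |g r - g (-r) - 2 * r * deriv g 0| ≤ C * r ^ 3 / 3 := by
  obtain ⟨ξ₁, hξ₁, h₁⟩ := taylor_mean_remainder_lagrange_two hg hr.ne'
  obtain ⟨ξ₂, hξ₂, h₂⟩ := taylor_mean_remainder_lagrange_two hg (neg_ne_zero.mpr hr.ne')
  rw [uIoo_of_le hr.le] at hξ₁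
  rw [uIoo_of_ge (neg_nonpos.mpr hr.le)] at hξ₂
  have hb₁ := hC ξ₁ ⟨by linarith [hξ₁.1], hξ₁.2.le⟩
  have hb₂ := hC ξ₂ ⟨hξ₂.1.le, by linarith [hξ₂.2]⟩
  have hsplit : g r - g (-r) - 2 * r * deriv g 0 =
      (iteratedDeriv 3 g ξ₁ + iteratedDeriv 3 g ξ₂) * (r ^ 3 / 6) := by
    linear_combination h₁ - h₂
  rw [hsplit, abs_mul, abs_of_pos (by positivity : 0 < r ^ 3 / 6)]
  calc |iteratedDeriv 3 g ξ₁ + iteratedDeriv 3 g ξ₂| * (r ^ 3 / 6)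
      ≤ (C + C) * (r ^ 3 / 6) := by
        gcongr; exact (abs_add_le _ _).trans (add_le_add hb₁ hb₂)
    _ = C * r ^ 3 / 3 := by ring

theorem abs_sub_sub_fderiv_midpoint_le {E : Type*} [NormedAddCommGroup E] [NormedSpace ℝ E]
    {f : E → ℝ} (hf : ContDiff ℝ 3 f) {x₁ x₂ : E} {C : ℝ}
    (hC : ∀ q ∈ segment ℝ x₁ x₂, |iteratedFDeriv ℝ 3 f q (fun _ => x₂ - x₁)| ≤ C) :
    |f x₂ - f x₁ - fderiv ℝ f (midpoint ℝ x₁ x₂) (x₂ - x₁)| ≤ C / 24 := by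
  set m := midpoint ℝ x₁ x₂
  set d := x₂ - x₁
  have hm : m = x₁ + (1 / 2 : ℝ) • d := by
    simp only [m, d, midpoint_eq_smul_add, invOf_eq_inv]; module
  have hg : ContDiff ℝ 3 (fun t : ℝ => f (m + t • d)) :=
    hf.comp (contDiff_const.add (contDiff_id.smul contDiff_const))
  have hbound : ∀ t ∈ Icc (-(1 / 2)) (1 / 2 : ℝ),
      |iteratedDeriv 3 (fun t : ℝ => f (m + t • d)) t| ≤ C := by
    intro t ht
    rw [iteratedDeriv_comp_add_smul hf m d le_rfl]
    refine hC _ ?_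
    rw [segment_eq_image']
    exact ⟨t + 1 / 2, ⟨by linarith [ht.1], by linarith [ht.2]⟩, by rw [hm]; module⟩
  have h := abs_sub_sub_two_mul_deriv_le hg (by norm_num : (0 : ℝ) < 1 / 2) hbound
  rw [← iteratedDeriv_one, iteratedDeriv_comp_add_smul hf m d (by norm_num),
    iteratedFDeriv_one_apply] at h
  have hx₂ : m + (1 / 2 : ℝ) • d = x₂ := by rw [hm]; module
  have hx₁ : m + (-(1 / 2) : ℝ) • d = x₁ := by rw [hm]; module
  rw [hx₂, hx₁, zero_smul, add_zero, show (2 : ℝ) * (1 / 2) = 1 by norm_num, one_mul] at h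
  linarith

theorem inner_gauss_toR3 (p d : E2) (w : ℝ) :
    ⟪gauss p, toR3 d w⟫ = (Real.sqrt (1 + ‖p‖ ^ 2))⁻¹ * (w - ⟪p, d⟫) := by
  simp only [gauss, toR3, PiLp.neg_apply, WithLp.equiv_symm_apply, PiLp.inner_apply,
    PiLp.smul_apply, smul_eq_mul, RCLike.inner_apply, Real.ringHom_apply, Fin.sum_univ_three,
    Fin.sum_univ_two, Matrix.cons_val_zero, Matrix.cons_val_one, Matrix.cons_val]
  ring

theorem abs_inner_gauss_toR3_le (p d : E2) (w : ℝ) :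
    |⟪gauss p, toR3 d w⟫| ≤ |w - ⟪p, d⟫| := by
  have hle : (Real.sqrt (1 + ‖p‖ ^ 2))⁻¹ ≤ 1 :=
    inv_le_one_of_one_le₀ (Real.one_le_sqrt.mpr (by nlinarith [sq_nonneg ‖p‖]))
  rw [inner_gauss_toR3, abs_mul, abs_of_nonneg (by positivity)]
  exact mul_le_of_le_one_left (abs_nonneg _) hle

theorem stmt_7_general (u : E2 → ℝ) (hu : ContDiff ℝ 3 u) (x₁ x₂ : E2) (K : ℝ)
    (hbound : ∀ q ∈ segment ℝ x₁ x₂, ∀ e : E2,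
      |iteratedFDeriv ℝ 3 u q ![e, e, e]| ≤ K * ‖e‖ ^ 3) :
    |⟪gauss (gradient u (midpoint ℝ x₁ x₂)),
        toR3 (x₂ - x₁) (u x₂ - u x₁)⟫| ≤ K / 24 * ‖x₂ - x₁‖ ^ 3 := by
  have hchord := abs_sub_sub_fderiv_midpoint_le hu (C := K * ‖x₂ - x₁‖ ^ 3) fun q hq => by
    simpa only [Matrix.vec_single_eq_const, Matrix.vecCons_const] using hbound q hq (x₂ - x₁)
  calc _ ≤ |u x₂ - u x₁ - ⟪gradient u (midpoint ℝ x₁ x₂), x₂ - x₁⟫| :=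
        abs_inner_gauss_toR3_le _ _ _
    _ = |u x₂ - u x₁ - fderiv ℝ u (midpoint ℝ x₁ x₂) (x₂ - x₁)| := by rw [inner_gradient_left]
    _ ≤ K / 24 * ‖x₂ - x₁‖ ^ 3 := by linarith

/-- the surface normal of the graph of `u` at the image of an
edge midpoint is almost orthogonal to the chord of the graph over that edge. -/
theorem stmt_7 (u : E2 → ℝ) (hu : ContDiff ℝ 3 u) (x₁ x₂ : E2) (K : ℝ)
    (hK : 0 ≤ K)
    (hbound : ∀ q ∈ segment ℝ x₁ x₂, ∀ e : E2,
      |iteratedFDeriv ℝ 3 u q ![e, e, e]| ≤ K * ‖e‖ ^ 3) :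
    |⟪gauss (gradient u (midpoint ℝ x₁ x₂)),
        toR3 (x₂ - x₁) (u x₂ - u x₁)⟫| ≤ K / 24 * ‖x₂ - x₁‖ ^ 3 :=
  stmt_7_general u hu x₁ x₂ K hbound
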